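/- arXiv:math/0503678 — 6 statements merged into one kernel-verified Lean document; each statement's English description precedes it below -/
import Mathlib

section
/- Let A be a factorial design in the design space D, let {C_t : t ∈ T} be an SOCB on D with coefficients b_t of A, and fix 1 ≤ l ≤ k. Let B be the projection of A onto the first l factors, i.e., the multiset image of A under the projection D → Π_{i ≤ l} Fin (s i). Then for every y ∈ Π_{i ≤ l} Fin (s i), the multiplicity of y in B equals N_2 · Σ_{t ∈ T_1} b_t · Π_{i ≤ l} C^i_{t i}(y i), where N_2 = Π_{i > l} s i and T_1 = { t ∈ T : t i = 0 for all i > l }. -/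
/-!
For `t` with `t i = 0` on the discarded factors, `C_t(x)` only sees the kept coordinates of `x`,
because `C^i_0 = 1`. Summing `C_t(x) · Π_{i ≤ l} C^i_{t i}(y i)` over such `t` therefore factorizes
into `Π_{i ≤ l} Σ_j C^i_j(x i) C^i_j(y i)`, and each factor is `s i · [x i = y i]` by column
orthogonality of the square array `C^i` (a matrix with orthogonal rows of equal length also has
orthogonal columns). Averaging over the points `x` of `A` turns the sum `Σ_{t ∈ T₁} b_t ⋯` into
`N₁ / N` times the number of points of `A` that agree with `y` on the kept factors, where
`N₁ = Π_{i ≤ l} s i = N / N₂`.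
-/

open Finset
open scoped Matrix

theorem Multiset.sum_map_boole {α R : Type*} [AddCommMonoidWithOne R] (A : Multiset α)
    (p : α → Prop) [DecidablePred p] :
    (A.map fun a => if p a then (1 : R) else 0).sum = (A.filter p).card := by
  induction A using Multiset.induction_on with
  | empty => simp
  | cons a A ih => by_cases h : p a <;> simp [h, ih, add_comm]

theorem Matrix.transpose_mul_self_eq_smul_one {ι R : Type*} [Fintype ι] [DecidableEq ι]
    [Field R] {M : Matrix ι ι R} {c : R} (hc : c ≠ 0) (h : M * Mᵀ = c • 1) :
    Mᵀ * M = c • 1 := by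
  have hinv : M * (c⁻¹ • Mᵀ) = 1 := by
    rw [Matrix.mul_smul, h, smul_smul, inv_mul_cancel₀ hc, one_smul]
  rw [← one_smul R (Mᵀ * M), ← mul_inv_cancel₀ hc, mul_smul, ← Matrix.smul_mul,
    mul_eq_one_comm.mp hinv]

theorem orthogonal_cols_of_orthogonal_rows {ι R : Type*} [Fintype ι] [DecidableEq ι] [Field R]
    {C : ι → ι → R} {c : R} (hc : c ≠ 0)
    (horth : ∀ u v, ∑ x, C u x * C v x = if u = v then c else 0) (x x' : ι) :
    ∑ j, C j x * C j x' = if x = x' then c else 0 := by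
  have hrows : Matrix.of C * (Matrix.of C)ᵀ = c • 1 := by
    ext u v
    simp [Matrix.mul_apply, horth, Matrix.one_apply]
  simpa [Matrix.mul_apply, Matrix.one_apply] using
    congr_fun₂ (Matrix.transpose_mul_self_eq_smul_one hc hrows) x x'

section ContrastBasis

variable {ι : Type*} [Fintype ι] [DecidableEq ι] {s : ι → ℕ}
  {C : ∀ i, Fin (s i) → Fin (s i) → ℝ}

/- `Q` marks the discarded factors (the paper's `i > l`). -/
theorem sum_contrast_mul_contrast_eq_ite (hs : ∀ i, 1 ≤ s i)
    (hcols : ∀ i (x x' : Fin (s i)), ∑ j, C i j x * C i j x' = if x = x' then (s i : ℝ) else 0)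
    (hC0 : ∀ i x, C i ⟨0, hs i⟩ x = 1) (Q : ι → Prop) [DecidablePred Q]
    (x y : ∀ i, Fin (s i)) :
    ∑ t ∈ univ.filter (fun t : ∀ i, Fin (s i) => ∀ i, Q i → (t i : ℕ) = 0),
        (∏ i, C i (t i) (x i)) * ∏ i ∈ univ.filter (fun i => ¬ Q i), C i (t i) (y i)
      = (∏ i ∈ univ.filter (fun i => ¬ Q i), (s i : ℝ)) *
          if ∀ i, ¬ Q i → x i = y i then 1 else 0 := by
  have hfactor : ∀ t : ∀ i, Fin (s i),
      (if ∀ i, Q i → (t i : ℕ) = 0 then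
        (∏ i, C i (t i) (x i)) * ∏ i ∈ univ.filter (fun i => ¬ Q i), C i (t i) (y i) else 0)
      = ∏ i, C i (t i) (x i) *
          if Q i then (if (t i : ℕ) = 0 then 1 else 0) else C i (t i) (y i) := by
    intro t
    rw [prod_mul_distrib, prod_ite, prod_boole]
    split_ifs <;> simp_all
  have hsum : ∀ i, ∑ j : Fin (s i), C i j (x i) *
        (if Q i then (if (j : ℕ) = 0 then 1 else 0) else C i j (y i))
      = if Q i then 1 else if x i = y i then (s i : ℝ) else 0 := by
    intro i
    by_cases hQ : Q i
    · have hzero : ∀ j : Fin (s i), (j : ℕ) = 0 ↔ j = ⟨0, hs i⟩ :=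
        fun j => (Fin.ext_iff (b := ⟨0, hs i⟩)).symm
      simp [hQ, hzero, hC0]
    · simpa [hQ] using hcols i (x i) (y i)
  have hkept : ∀ i, (if x i = y i then (s i : ℝ) else 0) = s i * if x i = y i then 1 else 0 := by
    simp
  rw [sum_filter, Fintype.sum_congr _ _ hfactor,
    ← Fintype.prod_sum (fun i j => C i j (x i) *
      if Q i then (if (j : ℕ) = 0 then 1 else 0) else C i j (y i)),
    Fintype.prod_congr _ _ hsum, prod_ite, prod_const_one, one_mul,
    prod_congr rfl (fun i _ => hkept i), prod_mul_distrib, prod_boole]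
  simp

theorem card_filter_eq_mul_sum_coeff (hs : ∀ i, 1 ≤ s i)
    (horth : ∀ i (u v : Fin (s i)), ∑ x, C i u x * C i v x = if u = v then (s i : ℝ) else 0)
    (hC0 : ∀ i x, C i ⟨0, hs i⟩ x = 1) (A : Multiset (∀ i, Fin (s i)))
    {b : (∀ i, Fin (s i)) → ℝ}
    (hb : ∀ t, b t = (1 / ((∏ i, s i : ℕ) : ℝ)) * (A.map (fun x => ∏ i, C i (t i) (x i))).sum)
    (Q : ι → Prop) [DecidablePred Q] (y : ∀ i, Fin (s i)) :
    ((A.filter fun x => ∀ i, ¬ Q i → x i = y i).card : ℝ)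
      = (∏ i ∈ univ.filter Q, (s i : ℝ)) *
          ∑ t ∈ univ.filter (fun t : ∀ i, Fin (s i) => ∀ i, Q i → (t i : ℕ) = 0),
            b t * ∏ i ∈ univ.filter (fun i => ¬ Q i), C i (t i) (y i) := by
  have hs0 : ∀ i, (s i : ℝ) ≠ 0 := fun i => Nat.cast_ne_zero.mpr (Nat.one_le_iff_ne_zero.mp (hs i))
  have hcols := fun i => orthogonal_cols_of_orthogonal_rows (hs0 i) (horth i)
  have hN : ((∏ i, s i : ℕ) : ℝ) =
      (∏ i ∈ univ.filter Q, (s i : ℝ)) * ∏ i ∈ univ.filter (fun i => ¬ Q i), (s i : ℝ) := by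
    rw [prod_filter_mul_prod_filter_not]
    push_cast
    rfl
  simp only [hb, mul_assoc, ← mul_sum, ← Multiset.sum_map_mul_right, ← Multiset.sum_map_sum,
    sum_contrast_mul_contrast_eq_ite hs hcols hC0, Multiset.sum_map_mul_left,
    Multiset.sum_map_boole]
  rw [hN]
  field_simp [prod_ne_zero_iff.mpr fun i _ => hs0 i]

end ContrastBasis

theorem Fin.prod_filter_val_lt {M : Type*} [CommMonoid M] {l k : ℕ} (h : l ≤ k)
    (f : Fin k → M) :
    ∏ i ∈ univ.filter (fun i : Fin k => (i : ℕ) < l), f i = ∏ j : Fin l, f (Fin.castLE h j) := by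
  have hrange : univ.map (Fin.castLEEmb h) = univ.filter (fun i : Fin k => (i : ℕ) < l) := by
    ext i
    simp only [mem_filter, mem_univ, true_and, mem_map, Fin.coe_castLEEmb]
    exact ⟨fun ⟨j, hj⟩ => hj ▸ j.isLt, fun hi => ⟨⟨i, hi⟩, rfl⟩⟩
  rw [← hrange, prod_map]
  rfl

def Fin.extendByZero {k l : ℕ} {s : Fin k → ℕ} (hs : ∀ i, 1 ≤ s i) (h : l ≤ k)
    (y : ∀ j : Fin l, Fin (s (Fin.castLE h j))) (i : Fin k) : Fin (s i) :=
  if hi : (i : ℕ) < l then y ⟨i, hi⟩ else ⟨0, hs i⟩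

@[simp]
theorem Fin.extendByZero_castLE {k l : ℕ} {s : Fin k → ℕ} (hs : ∀ i, 1 ≤ s i) (h : l ≤ k)
    (y : ∀ j : Fin l, Fin (s (Fin.castLE h j))) (j : Fin l) :
    Fin.extendByZero hs h y (Fin.castLE h j) = y j :=
  dif_pos j.isLt

theorem Fin.eq_comp_castLE_iff {k l : ℕ} {s : Fin k → ℕ} (hs : ∀ i, 1 ≤ s i) (h : l ≤ k)
    (y : ∀ j : Fin l, Fin (s (Fin.castLE h j))) (x : ∀ i, Fin (s i)) :
    (y = fun j => x (Fin.castLE h j)) ↔ ∀ i : Fin k, (i : ℕ) < l → x i = extendByZero hs h y i := by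
  constructor
  · rintro rfl i hi
    simp [extendByZero, hi]
  · intro hx
    funext j
    simpa using (hx (Fin.castLE h j) j.isLt).symm

theorem indicator_of_projection_general
    (k : ℕ) (s : Fin k → ℕ) (hs : ∀ i, 1 ≤ s i)
    (C : ∀ i : Fin k, Fin (s i) → Fin (s i) → ℝ)
    (horth : ∀ (i : Fin k) (u v : Fin (s i)),
      ∑ x : Fin (s i), C i u x * C i v x = if u = v then (s i : ℝ) else 0)
    (hC0 : ∀ (i : Fin k) (x : Fin (s i)), C i ⟨0, hs i⟩ x = 1)
    (A : Multiset (∀ i, Fin (s i)))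
    (b : (∀ i, Fin (s i)) → ℝ)
    (hb : ∀ t : (∀ i, Fin (s i)),
      b t = (1 / ((∏ i, s i : ℕ) : ℝ)) * (A.map (fun x => ∏ i, C i (t i) (x i))).sum)
    (l : ℕ) (hlk : l ≤ k)
    (y : ∀ i : Fin l, Fin (s (Fin.castLE hlk i))) :
    (((A.map (fun x => (fun i : Fin l => x (Fin.castLE hlk i)))).count y : ℝ)) =
      ((∏ i ∈ Finset.univ.filter (fun i : Fin k => l ≤ (i : ℕ)), s i : ℕ) : ℝ) *
        ∑ t ∈ Finset.univ.filter
            (fun t : (∀ i, Fin (s i)) => ∀ i : Fin k, l ≤ (i : ℕ) → (t i : ℕ) = 0),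
          b t * ∏ i : Fin l, C (Fin.castLE hlk i) (t (Fin.castLE hlk i)) (y i) := by
  rw [Multiset.count_map]
  convert card_filter_eq_mul_sum_coeff hs horth hC0 A hb (fun i : Fin k => l ≤ (i : ℕ))
    (Fin.extendByZero hs hlk y) using 3
  · congr 1
    funext x
    exact propext (by simpa only [not_le] using Fin.eq_comp_castLE_iff hs hlk y x)
  · exact Nat.cast_prod _ _
  · congr -- the two index sets differ only in their `Decidable` instances
  · simp only [not_le, Fin.prod_filter_val_lt hlk, Fin.extendByZero_castLE]

/-- **Corollary 2.1.** Let `B` be the projection of `A` onto the first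
`l` factors. Then the multiplicity of a point `y` in `B` is
`N₂ · Σ_{t ∈ T₁} b_t · Π_{i ≤ l} C^i_{t i}(y i)`, where `N₂ = Π_{i > l} s i` and
`T₁ = { t : t i = 0 for all i > l }`. -/
theorem indicator_of_projection
    (k : ℕ) (hk : 1 ≤ k) (s : Fin k → ℕ) (hs : ∀ i, 1 ≤ s i)
    (C : ∀ i : Fin k, Fin (s i) → Fin (s i) → ℝ)
    (horth : ∀ (i : Fin k) (u v : Fin (s i)),
      ∑ x : Fin (s i), C i u x * C i v x = if u = v then (s i : ℝ) else 0)
    (hC0 : ∀ (i : Fin k) (x : Fin (s i)), C i ⟨0, hs i⟩ x = 1)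
    (A : Multiset (∀ i, Fin (s i)))
    (b : (∀ i, Fin (s i)) → ℝ)
    (hb : ∀ t : (∀ i, Fin (s i)),
      b t = (1 / ((∏ i, s i : ℕ) : ℝ)) * (A.map (fun x => ∏ i, C i (t i) (x i))).sum)
    (l : ℕ) (hl1 : 1 ≤ l) (hlk : l ≤ k)
    (y : ∀ i : Fin l, Fin (s (Fin.castLE hlk i))) :
    (((A.map (fun x => (fun i : Fin l => x (Fin.castLE hlk i)))).count y : ℝ)) =
      ((∏ i ∈ Finset.univ.filter (fun i : Fin k => l ≤ (i : ℕ)), s i : ℕ) : ℝ) *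
        ∑ t ∈ Finset.univ.filter
            (fun t : (∀ i, Fin (s i)) => ∀ i : Fin k, l ≤ (i : ℕ) → (t i : ℕ) = 0),
          b t * ∏ i : Fin l, C (Fin.castLE hlk i) (t (Fin.castLE hlk i)) (y i) :=
  indicator_of_projection_general k s hs C horth hC0 A b hb l hlk y
end

section
/- Let A be a factorial design in the design space D, let {C_t : t ∈ T} be an SOCB on D with coefficients b_t of A, and let u, v ∈ T be disjoint, i.e., min(u i, v i) = 0 for every i. Then b_{u+v} = (1/N) · Σ_{x ∈ A} C_u(x) · C_v(x), where (u+v) i = u i + v i; consequently, if A is nonempty, then (1/n) · Σ_{x ∈ A} C_u(x) · C_v(x) = b_{u+v} / b_0. -/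
/-
The constant contrast `C^i_0 = 1` is the identity for multiplication, so where `u` and `v` have
disjoint supports each factor `C^i_{u_i + v_i}` of `C_{u+v}` equals `C^i_{u_i} · C^i_{v_i}`: one of
the two is the constant contrast. Hence `C_{u+v} = C_u · C_v` pointwise, which gives the formula
for `b_{u+v}`. Since `C_0 = 1`, `b_0 = n / N`, and dividing the two identities gives the ratio.
-/

open Finset

lemma apply_eq_mul_of_min_eq_zero {M : Type*} [MulOneClass M] {n : ℕ} (hn : 1 ≤ n)
    (c : Fin n → M) (hc0 : c ⟨0, hn⟩ = 1) {u v w : Fin n} (hdisj : min (u : ℕ) v = 0)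
    (hw : (w : ℕ) = u + v) : c w = c u * c v := by
  rcases Nat.min_eq_zero_iff.mp hdisj with hu | hv
  · rw [show u = ⟨0, hn⟩ from Fin.ext hu, show w = v from Fin.ext (by omega), hc0, one_mul]
  · rw [show v = ⟨0, hn⟩ from Fin.ext hv, show w = u from Fin.ext (by omega), hc0, mul_one]

lemma prod_apply_eq_mul_of_disjoint {M : Type*} [CommMonoid M] {ι : Type*} [Fintype ι]
    {s : ι → ℕ} (hs : ∀ i, 1 ≤ s i) (c : ∀ i, Fin (s i) → M) (hc0 : ∀ i, c i ⟨0, hs i⟩ = 1)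
    {u v w : ∀ i, Fin (s i)} (hdisj : ∀ i, min (u i : ℕ) (v i) = 0)
    (hw : ∀ i, (w i : ℕ) = u i + v i) :
    ∏ i, c i (w i) = (∏ i, c i (u i)) * ∏ i, c i (v i) := by
  rw [← prod_mul_distrib]
  exact prod_congr rfl fun i _ => apply_eq_mul_of_min_eq_zero (hs i) (c i) (hc0 i) (hdisj i) (hw i)

theorem coefficient_of_disjoint_contrasts_general
    (k : ℕ) (s : Fin k → ℕ) (hs : ∀ i, 1 ≤ s i)
    (C : ∀ i : Fin k, Fin (s i) → Fin (s i) → ℝ)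
    (hC0 : ∀ (i : Fin k) (x : Fin (s i)), C i ⟨0, hs i⟩ x = 1)
    (A : Multiset (∀ i, Fin (s i)))
    (b : (∀ i, Fin (s i)) → ℝ)
    (hb : ∀ t : (∀ i, Fin (s i)),
      b t = (1 / ((∏ i, s i : ℕ) : ℝ)) * (A.map (fun x => ∏ i, C i (t i) (x i))).sum)
    (u v w : ∀ i, Fin (s i))
    (hdisj : ∀ i, min ((u i : ℕ)) ((v i : ℕ)) = 0)
    (hw : ∀ i, (w i : ℕ) = (u i : ℕ) + (v i : ℕ)) :
    b w = (1 / ((∏ i, s i : ℕ) : ℝ)) *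
        (A.map (fun x => (∏ i, C i (u i) (x i)) * (∏ i, C i (v i) (x i)))).sum ∧
    (A ≠ 0 →
      (1 / (Multiset.card A : ℝ)) *
          (A.map (fun x => (∏ i, C i (u i) (x i)) * (∏ i, C i (v i) (x i)))).sum =
        b w / b (fun i => ⟨0, hs i⟩)) := by
  have hbw : b w = (1 / ((∏ i, s i : ℕ) : ℝ)) *
      (A.map (fun x => (∏ i, C i (u i) (x i)) * (∏ i, C i (v i) (x i)))).sum := by
    rw [hb w, Multiset.map_congr rfl fun x _ =>
      prod_apply_eq_mul_of_disjoint hs (fun i j => C i j (x i)) (fun i => hC0 i (x i)) hdisj hw]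
  have hb0 : b (fun i => ⟨0, hs i⟩) = (1 / ((∏ i, s i : ℕ) : ℝ)) * Multiset.card A := by
    simp [hb, hC0]
  refine ⟨hbw, fun hA => ?_⟩
  have hN : ((∏ i, s i : ℕ) : ℝ) ≠ 0 := Nat.cast_ne_zero.mpr (prod_pos fun i _ => hs i).ne'
  have hn : (Multiset.card A : ℝ) ≠ 0 := by simpa using hA
  rw [hbw, hb0]
  field_simp

/-- **Corollary 2.2.** For disjoint `u, v ∈ T` (no common nonzero
coordinate), `b_{u+v} = (1/N) Σ_{x ∈ A} C_u(x) C_v(x)`; consequently, for a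
nonempty design, the correlation `(1/n) Σ_{x ∈ A} C_u(x) C_v(x)` equals
`b_{u+v} / b_0`. -/
theorem coefficient_of_disjoint_contrasts
    (k : ℕ) (hk : 1 ≤ k) (s : Fin k → ℕ) (hs : ∀ i, 1 ≤ s i)
    (C : ∀ i : Fin k, Fin (s i) → Fin (s i) → ℝ)
    (horth : ∀ (i : Fin k) (u v : Fin (s i)),
      ∑ x : Fin (s i), C i u x * C i v x = if u = v then (s i : ℝ) else 0)
    (hC0 : ∀ (i : Fin k) (x : Fin (s i)), C i ⟨0, hs i⟩ x = 1)
    (A : Multiset (∀ i, Fin (s i)))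
    (b : (∀ i, Fin (s i)) → ℝ)
    (hb : ∀ t : (∀ i, Fin (s i)),
      b t = (1 / ((∏ i, s i : ℕ) : ℝ)) * (A.map (fun x => ∏ i, C i (t i) (x i))).sum)
    (u v w : ∀ i, Fin (s i))
    (hdisj : ∀ i, min ((u i : ℕ)) ((v i : ℕ)) = 0)
    (hw : ∀ i, (w i : ℕ) = (u i : ℕ) + (v i : ℕ)) :
    b w = (1 / ((∏ i, s i : ℕ) : ℝ)) *
        (A.map (fun x => (∏ i, C i (u i) (x i)) * (∏ i, C i (v i) (x i)))).sum ∧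
    (A ≠ 0 →
      (1 / (Multiset.card A : ℝ)) *
          (A.map (fun x => (∏ i, C i (u i) (x i)) * (∏ i, C i (v i) (x i)))).sum =
        b w / b (fun i => ⟨0, hs i⟩)) :=
  coefficient_of_disjoint_contrasts_general k s hs C hC0 A b hb u v w hdisj hw
end

section
/- Let s ≥ 1 and let p_0, p_1, …, p_{s−1} be real polynomials such that p_j has degree exactly j for each j and Σ_{x=0}^{s−1} p_u(x) · p_v(x) = s if u = v and = 0 if u ≠ v. Then each p_j satisfies the reflection identity p_j(s − 1 − X) = (−1)^j · p_j(X) as an identity of polynomials. -/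
/-!
The discrete inner product `⟨f, g⟩ = ∑_{x < s} f(x) g(x)` is invariant under the reflection
`x ↦ s - 1 - x` of the levels, so `q_j = p_j(s - 1 - X)` is again an orthogonal family with
`deg q_j = j`. Hence `q_j` and `(-1)^j p_j` are both orthogonal to every polynomial of degree `< j`,
and they have the same leading coefficient. Their difference has degree `< j`, so it is orthogonal
to itself, vanishes at the `s` levels, and is zero.
-/

open Polynomial Finset

namespace Polynomial

section Reflection

variable {R : Type*} [CommRing R] [IsDomain R] (a : R) (f : R[X])

lemma natDegree_C_sub_X : (C a - X).natDegree = 1 := by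
  rw [← neg_sub, natDegree_neg, natDegree_X_sub_C]

lemma natDegree_comp_C_sub_X : (f.comp (C a - X)).natDegree = f.natDegree := by
  rw [natDegree_comp, natDegree_C_sub_X, mul_one]

lemma leadingCoeff_comp_C_sub_X :
    (f.comp (C a - X)).leadingCoeff = (-1) ^ f.natDegree * f.leadingCoeff := by
  rw [leadingCoeff_comp (by simp [natDegree_C_sub_X]), mul_comm, ← neg_sub, leadingCoeff_neg,
    leadingCoeff_X_sub_C]

lemma degree_comp_C_sub_X : (f.comp (C a - X)).degree = f.degree := by
  rcases eq_or_ne f 0 with rfl | hf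
  · simp
  have : f.comp (C a - X) ≠ 0 := by
    rw [← leadingCoeff_ne_zero, leadingCoeff_comp_C_sub_X]
    simpa using hf
  rw [degree_eq_natDegree hf, degree_eq_natDegree this, natDegree_comp_C_sub_X]

end Reflection

lemma degreeLT_le_ker_of_degree_eq {K M : Type*} [Field K] [AddCommGroup M] [Module K M] {s n : ℕ}
    (hn : n ≤ s) (p : Fin s → K[X]) (hp : ∀ j, (p j).degree = j) (φ : K[X] →ₗ[K] M)
    (hφ : ∀ j : Fin s, (j : ℕ) < n → φ (p j) = 0) : degreeLT K n ≤ LinearMap.ker φ := by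
  let S : Sequence K :=
    { elems' := fun i => if h : i < s then p ⟨i, h⟩ else X ^ i
      degree_eq' := fun i => by split_ifs <;> simp [hp, Nat.cast_withBot] }
  rw [← S.span_degreeLT fun i _ => (leadingCoeff_ne_zero.mpr (S.ne_zero i)).isUnit,
    Submodule.span_le]
  rintro _ ⟨i, hi : i < n, rfl⟩
  simpa [S, hi.trans_le hn] using hφ ⟨i, hi.trans_le hn⟩ hi

variable (R : Type*) [CommRing R]

noncomputable def levelForm (s : ℕ) : LinearMap.BilinForm R R[X] :=
  ∑ x ∈ range s, (LinearMap.mul R R).compl₁₂ (leval (x : R)) (leval (x : R))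

variable {R}

@[simp]
lemma levelForm_apply (s : ℕ) (f g : R[X]) :
    levelForm R s f g = ∑ x ∈ range s, f.eval (x : R) * g.eval (x : R) := by
  simp [levelForm]

lemma levelForm_comp_C_sub_X (s : ℕ) (f g : R[X]) :
    levelForm R s (f.comp (C ((s : R) - 1) - X)) (g.comp (C ((s : R) - 1) - X)) =
      levelForm R s f g := by
  simp only [levelForm_apply, eval_comp, eval_sub, eval_C, eval_X]
  rw [← sum_range_reflect]
  refine sum_congr rfl fun x hx => ?_
  have hx' : ((s - 1 - x : ℕ) : R) = s - 1 - x := by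
    rw [Nat.sub_sub, Nat.cast_sub (by grind)]
    push_cast
    ring
  rw [hx', sub_sub_cancel]

lemma eq_zero_of_levelForm_self_eq_zero {K : Type*} [Field K] [LinearOrder K]
    [IsStrictOrderedRing K] {s : ℕ} {r : K[X]} (hr : r.degree < s) (h : levelForm K s r r = 0) :
    r = 0 := by
  by_contra hr0
  rw [levelForm_apply, sum_mul_self_eq_zero_iff] at h
  refine hr0 (eq_zero_of_natDegree_lt_card_of_eval_eq_zero r
    (Nat.cast_injective.comp Fin.val_injective) (fun i : Fin s => h i (by simp)) ?_)
  simpa using (natDegree_lt_iff_degree_lt hr0).mpr hr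

lemma eq_of_leadingCoeff_eq_of_degreeLT_le_ker {K : Type*} [Field K] [LinearOrder K]
    [IsStrictOrderedRing K] {s n : ℕ} {f g : K[X]} (hn : n < s) (hf : f.degree = n)
    (hg : g.degree = n) (hlc : f.leadingCoeff = g.leadingCoeff)
    (hf_perp : degreeLT K n ≤ LinearMap.ker (levelForm K s f))
    (hg_perp : degreeLT K n ≤ LinearMap.ker (levelForm K s g)) : f = g := by
  have hf0 : f ≠ 0 := by rintro rfl; simp at hf
  have hdeg : (f - g).degree < n := hf ▸ degree_sub_lt_left (hf.trans hg.symm) hf0 hlc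
  have hmem : f - g ∈ degreeLT K n := mem_degreeLT.mpr hdeg
  rw [← sub_eq_zero]
  refine eq_zero_of_levelForm_self_eq_zero (hdeg.trans (by exact_mod_cast hn)) ?_
  rw [map_sub (levelForm K s) f g, LinearMap.sub_apply, hf_perp hmem, hg_perp hmem, sub_zero]

end Polynomial

theorem orthogonal_polynomial_reflection_general
    (s : ℕ) (p : Fin s → Polynomial ℝ)
    (hdeg : ∀ j : Fin s, (p j).degree = ((j : ℕ) : WithBot ℕ))
    (horth : ∀ u v : Fin s,
      ∑ x ∈ Finset.range s, (p u).eval (x : ℝ) * (p v).eval (x : ℝ) =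
        if u = v then (s : ℝ) else 0) :
    ∀ j : Fin s,
      (p j).comp (Polynomial.C ((s : ℝ) - 1) - Polynomial.X) =
        (-1 : Polynomial ℝ) ^ (j : ℕ) * p j := by
  intro j
  set q : Fin s → ℝ[X] := fun i => (p i).comp (C ((s : ℝ) - 1) - X)
  have hq_deg : ∀ i, (q i).degree = i := fun i => (degree_comp_C_sub_X _ _).trans (hdeg i)
  have horth_of_lt : ∀ i : Fin s, (i : ℕ) < j → levelForm ℝ s (p j) (p i) = 0 := fun i hi => by
    simpa [Fin.ne_of_gt hi] using horth j i
  rw [show (-1 : ℝ[X]) ^ (j : ℕ) * p j = ((-1 : ℝ) ^ (j : ℕ)) • p j by simp [smul_eq_C_mul]]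
  refine eq_of_leadingCoeff_eq_of_degreeLT_le_ker j.isLt (hq_deg j) ?_ ?_ ?_ ?_
  · rw [smul_eq_C_mul, degree_C_mul (by simp), hdeg]
  · rw [leadingCoeff_comp_C_sub_X, smul_eq_C_mul, leadingCoeff_mul, leadingCoeff_C,
      natDegree_eq_of_degree_eq_some (hdeg j)]
  · refine degreeLT_le_ker_of_degree_eq j.isLt.le q hq_deg _ fun i hi => ?_
    rw [levelForm_comp_C_sub_X]
    exact horth_of_lt i hi
  · refine degreeLT_le_ker_of_degree_eq j.isLt.le p hdeg _ fun i hi => ?_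
    rw [map_smul, LinearMap.smul_apply, horth_of_lt i hi, smul_zero]

/-- A system of orthonormal polynomial contrasts `p_0, …, p_{s-1}`
on the evenly spaced levels `{0, 1, …, s-1}` (with `p_j` of degree exactly `j`)
satisfies the reflection identity `p_j(s - 1 - X) = (-1)^j · p_j(X)`. -/
theorem orthogonal_polynomial_reflection
    (s : ℕ) (hs : 1 ≤ s) (p : Fin s → Polynomial ℝ)
    (hdeg : ∀ j : Fin s, (p j).degree = ((j : ℕ) : WithBot ℕ))
    (horth : ∀ u v : Fin s,
      ∑ x ∈ Finset.range s, (p u).eval (x : ℝ) * (p v).eval (x : ℝ) =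
        if u = v then (s : ℝ) else 0) :
    ∀ j : Fin s,
      (p j).comp (Polynomial.C ((s : ℝ) - 1) - Polynomial.X) =
        (-1 : Polynomial ℝ) ^ (j : ℕ) * p j :=
  orthogonal_polynomial_reflection_general s p hdeg horth
end

section
/- Let A be a nonempty factorial design with n runs in the design space D and let {C_t : t ∈ T} be an SOCB on D with coefficients b_t of A. Then Σ_{t ∈ T} (b_t / b_0)² = n_2 · N / n², where n_2 = Σ_{x ∈ D} F_A(x)². -/
/-!
The matrix `M t x = C_t(x)` of the contrast basis is the Kronecker product of the factor
matrices `C^i`, so its rows are orthogonal of squared length `N`: `M Mᵀ = N • 1`. Being square,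
`M` then also satisfies `Mᵀ M = N • 1`, which is Parseval's identity
`Σ_t (M F)_t² = N Σ_x F(x)²`. Since `b = N⁻¹ • M F_A`, this gives `Σ_t b_t² = n₂ / N`,
and `C_0 = 1` gives `b_0 = n / N`.
-/

open Finset Matrix

namespace Matrix

theorem transpose_mul_self_eq_smul_one_s10 {n K : Type*} [Fintype n] [DecidableEq n] [Field K]
    {M : Matrix n n K} {c : K} (hc : c ≠ 0) (h : M * Mᵀ = c • 1) : Mᵀ * M = c • 1 := by
  have hinv : (c⁻¹ • M) * Mᵀ = 1 := by
    rw [smul_mul_assoc, h, smul_smul, inv_mul_cancel₀ hc, one_smul]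
  have hinv' := mul_eq_one_comm.mp hinv
  rw [mul_smul_comm] at hinv'
  rw [← hinv', smul_smul, mul_inv_cancel₀ hc, one_smul]

theorem sum_sq_mulVec_of_transpose_mul_self {m n R : Type*} [Fintype m] [Fintype n]
    [DecidableEq n] [CommSemiring R] {M : Matrix m n R} {c : R} (h : Mᵀ * M = c • 1)
    (v : n → R) : ∑ i, (M *ᵥ v) i ^ 2 = c * ∑ j, v j ^ 2 := by
  have hdot : (M *ᵥ v) ⬝ᵥ (M *ᵥ v) = c * v ⬝ᵥ v := by
    rw [dotProduct_mulVec, ← mulVec_transpose, mulVec_mulVec, dotProduct_comm, h, smul_mulVec,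
      one_mulVec, dotProduct_smul, smul_eq_mul]
  simpa [dotProduct, sq] using hdot

section piKronecker

variable {ι R : Type*} [Fintype ι] [CommSemiring R] {α β : ι → Type*}

def piKronecker (f : ∀ i, Matrix (α i) (β i) R) : Matrix (∀ i, α i) (∀ i, β i) R :=
  of fun t x => ∏ i, f i (t i) (x i)

theorem piKronecker_mul_transpose [DecidableEq ι] [∀ i, DecidableEq (α i)] [∀ i, Fintype (β i)]
    {f : ∀ i, Matrix (α i) (β i) R} {m : ι → R} (hf : ∀ i, f i * (f i)ᵀ = m i • 1) :
    piKronecker f * (piKronecker f)ᵀ = (∏ i, m i) • 1 := by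
  ext t t'
  have hfactor (i : ι) :
      ∑ x, f i (t i) x * f i (t' i) x = if t i = t' i then m i else 0 := by
    simpa [mul_apply, one_apply] using congrFun (congrFun (hf i) (t i)) (t' i)
  simp only [mul_apply, transpose_apply, piKronecker, of_apply, ← prod_mul_distrib]
  rw [← Fintype.prod_sum (fun i x => f i (t i) x * f i (t' i) x)]
  simp_rw [hfactor, Fintype.prod_ite_zero, ← funext_iff, smul_apply, one_apply, smul_eq_mul,
    mul_ite, mul_one, mul_zero]

end piKronecker

end Matrix

theorem Multiset.sum_map_eq_sum_count {α M : Type*} [Fintype α] [DecidableEq α]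
    [AddCommMonoid M] (A : Multiset α) (f : α → M) :
    (A.map f).sum = ∑ x, A.count x • f x := by
  rw [Finset.sum_multiset_map_count]
  exact Finset.sum_subset (subset_univ _) fun x _ hx => by
    rw [Multiset.count_eq_zero.mpr (by simpa using hx), zero_smul]

theorem sum_normalized_coefficients_sq_general
    (k : ℕ) (s : Fin k → ℕ) (hs : ∀ i, 1 ≤ s i)
    (C : ∀ i : Fin k, Fin (s i) → Fin (s i) → ℝ)
    (horth : ∀ (i : Fin k) (u v : Fin (s i)),
      ∑ x : Fin (s i), C i u x * C i v x = if u = v then (s i : ℝ) else 0)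
    (hC0 : ∀ (i : Fin k) (x : Fin (s i)), C i ⟨0, hs i⟩ x = 1)
    (A : Multiset (∀ i, Fin (s i)))
    (b : (∀ i, Fin (s i)) → ℝ)
    (hb : ∀ t : (∀ i, Fin (s i)),
      b t = (1 / ((∏ i, s i : ℕ) : ℝ)) * (A.map (fun x => ∏ i, C i (t i) (x i))).sum) :
    ∑ t : (∀ i, Fin (s i)), (b t / b (fun i => ⟨0, hs i⟩)) ^ 2 =
      (∑ x : (∀ i, Fin (s i)), (A.count x : ℝ) ^ 2) * ((∏ i, s i : ℕ) : ℝ) /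
        (Multiset.card A : ℝ) ^ 2 := by
  classical
  set N : ℝ := ((∏ i, s i : ℕ) : ℝ)
  set M := piKronecker fun i => of (C i)
  have hN : N ≠ 0 :=
    Nat.cast_ne_zero.mpr <| prod_ne_zero_iff.mpr fun i _ => Nat.one_le_iff_ne_zero.mp (hs i)
  have hrows (i : Fin k) : of (C i) * (of (C i))ᵀ = (s i : ℝ) • 1 := by
    ext u v
    simpa [mul_apply, one_apply] using horth i u v
  have hcols : Mᵀ * M = N • 1 :=
    transpose_mul_self_eq_smul_one_s10 hN (by simpa [N] using piKronecker_mul_transpose hrows)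
  have hbM (t) : b t = N⁻¹ * (M *ᵥ fun x => (A.count x : ℝ)) t := by
    simp [hb, Multiset.sum_map_eq_sum_count, mulVec, dotProduct, M, piKronecker, mul_comm, N]
  have hb0 : b (fun i => ⟨0, hs i⟩) = Multiset.card A / N := by
    simp [hb, hC0, N, div_eq_inv_mul]
  have hsq : ∑ t, b t ^ 2 = N⁻¹ * ∑ x, (A.count x : ℝ) ^ 2 := by
    simp_rw [hbM, mul_pow, ← mul_sum, sum_sq_mulVec_of_transpose_mul_self hcols]
    field_simp
  simp_rw [div_pow, ← sum_div, hsq, hb0]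
  field_simp

/-- **Theorem 4.1.** For a nonempty design `A` with `n` runs and SOCB
coefficients `b_t`, one has `Σ_{t ∈ T} (b_t / b_0)² = n₂ · N / n²`, where
`n₂ = Σ_{x ∈ D} F_A(x)²`. -/
theorem sum_normalized_coefficients_sq
    (k : ℕ) (hk : 1 ≤ k) (s : Fin k → ℕ) (hs : ∀ i, 1 ≤ s i)
    (C : ∀ i : Fin k, Fin (s i) → Fin (s i) → ℝ)
    (horth : ∀ (i : Fin k) (u v : Fin (s i)),
      ∑ x : Fin (s i), C i u x * C i v x = if u = v then (s i : ℝ) else 0)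
    (hC0 : ∀ (i : Fin k) (x : Fin (s i)), C i ⟨0, hs i⟩ x = 1)
    (A : Multiset (∀ i, Fin (s i))) (hA : A ≠ 0)
    (b : (∀ i, Fin (s i)) → ℝ)
    (hb : ∀ t : (∀ i, Fin (s i)),
      b t = (1 / ((∏ i, s i : ℕ) : ℝ)) * (A.map (fun x => ∏ i, C i (t i) (x i))).sum) :
    ∑ t : (∀ i, Fin (s i)), (b t / b (fun i => ⟨0, hs i⟩)) ^ 2 =
      (∑ x : (∀ i, Fin (s i)), (A.count x : ℝ) ^ 2) * ((∏ i, s i : ℕ) : ℝ) /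
        (Multiset.card A : ℝ) ^ 2 :=
  sum_normalized_coefficients_sq_general k s hs C horth hC0 A b hb
end

section
/- Let A be a factorial design in the design space D and let {C_t : t ∈ T} be an OCB on D with coefficients b_t of A. Suppose that for each factor i and each pair u_i, v_i ∈ Fin (s i) there are real numbers h^{(i,u_i,v_i)}_w, w ∈ Fin (s i), such that C^i_{u_i}(x) · C^i_{v_i}(x) = Σ_{w ∈ Fin (s i)} h^{(i,u_i,v_i)}_w · C^i_w(x) for all x ∈ Fin (s i). Then for all u, v ∈ T, (1/N) · Σ_{x ∈ A} C_u(x) · C_v(x) = Σ_{w ∈ T} (Π_i h^{(i,u_i,v_i)}_{w_i}) · b_w. -/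
/-! Expanding each factor `C^i_{u_i} C^i_{v_i} = Σ_w h^{(i,u_i,v_i)}_w C^i_w` and multiplying out
the product over the factors writes `C_u C_v` as the linear combination
`Σ_w (Π_i h^{(i,u_i,v_i)}_{w_i}) C_w` of contrast basis functions; averaging over the design is
linear, and the average of `C_w` is `b_w`. -/

open Finset

theorem prod_eq_sum_pi_of_eq_sum {ι R : Type*} [Fintype ι] [DecidableEq ι] [CommSemiring R]
    {κ : ι → Type*} [∀ i, Fintype (κ i)] (f : ι → R) (c g : ∀ i, κ i → R)
    (hf : ∀ i, f i = ∑ w, c i w * g i w) :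
    ∏ i, f i = ∑ w : ∀ i, κ i, (∏ i, c i (w i)) * ∏ i, g i (w i) := by
  simp only [hf, prod_univ_sum, Fintype.piFinset_univ, prod_mul_distrib]

theorem correlation_formula_general
    (k : ℕ) (s : Fin k → ℕ)
    (C : ∀ i : Fin k, Fin (s i) → Fin (s i) → ℝ)
    (A : Multiset (∀ i, Fin (s i)))
    (b : (∀ i, Fin (s i)) → ℝ)
    (hb : ∀ t : (∀ i, Fin (s i)),
      b t = (1 / ((∏ i, s i : ℕ) : ℝ)) * (A.map (fun x => ∏ i, C i (t i) (x i))).sum)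
    (h : ∀ i : Fin k, Fin (s i) → Fin (s i) → Fin (s i) → ℝ)
    (hh : ∀ (i : Fin k) (u v : Fin (s i)) (x : Fin (s i)),
      C i u x * C i v x = ∑ w : Fin (s i), h i u v w * C i w x)
    (u v : ∀ i, Fin (s i)) :
    (1 / ((∏ i, s i : ℕ) : ℝ)) *
        (A.map (fun x => (∏ i, C i (u i) (x i)) * (∏ i, C i (v i) (x i)))).sum =
      ∑ w : (∀ i, Fin (s i)), (∏ i, h i (u i) (v i) (w i)) * b w := by
  have expand : ∀ x : ∀ i, Fin (s i), (∏ i, C i (u i) (x i)) * (∏ i, C i (v i) (x i)) =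
      ∑ w : ∀ i, Fin (s i), (∏ i, h i (u i) (v i) (w i)) * ∏ i, C i (w i) (x i) := fun x => by
    rw [← prod_mul_distrib]
    exact prod_eq_sum_pi_of_eq_sum _ _ _ fun i => hh i (u i) (v i) (x i)
  simp only [expand, Multiset.sum_map_sum, Multiset.sum_map_mul_left, mul_sum, hb]
  exact sum_congr rfl fun w _ => mul_left_comm _ _ _

/-- **equation (5.1).** If for each factor `i` the products of
contrasts expand as `C^i_u · C^i_v = Σ_w h^{(i,u,v)}_w C^i_w`, then for all
`u, v ∈ T`, `(1/N) Σ_{x ∈ A} C_u(x) C_v(x) = Σ_{w ∈ T} (Π_i h^{(i,u_i,v_i)}_{w_i}) b_w`. -/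
theorem correlation_formula
    (k : ℕ) (hk : 1 ≤ k) (s : Fin k → ℕ) (hs : ∀ i, 1 ≤ s i)
    (C : ∀ i : Fin k, Fin (s i) → Fin (s i) → ℝ)
    (horth : ∀ (i : Fin k) (u v : Fin (s i)),
      ∑ x : Fin (s i), C i u x * C i v x = if u = v then (s i : ℝ) else 0)
    (A : Multiset (∀ i, Fin (s i)))
    (b : (∀ i, Fin (s i)) → ℝ)
    (hb : ∀ t : (∀ i, Fin (s i)),
      b t = (1 / ((∏ i, s i : ℕ) : ℝ)) * (A.map (fun x => ∏ i, C i (t i) (x i))).sum)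
    (h : ∀ i : Fin k, Fin (s i) → Fin (s i) → Fin (s i) → ℝ)
    (hh : ∀ (i : Fin k) (u v : Fin (s i)) (x : Fin (s i)),
      C i u x * C i v x = ∑ w : Fin (s i), h i u v w * C i w x)
    (u v : ∀ i, Fin (s i)) :
    (1 / ((∏ i, s i : ℕ) : ℝ)) *
        (A.map (fun x => (∏ i, C i (u i) (x i)) * (∏ i, C i (v i) (x i)))).sum =
      ∑ w : (∀ i, Fin (s i)), (∏ i, h i (u i) (v i) (w i)) * b w :=
  correlation_formula_general k s C A b hb h hh u v
end

section
/- Let A be a factorial design with n runs in the design space D, let {C_t : t ∈ T} be an SOCB on D with coefficients b_t of A, and let m be a positive integer with m ≤ k. Then A is an orthogonal array of strength m if and only if b_t = 0 for every t ∈ T with 1 ≤ ‖t‖₀ ≤ m, where ‖t‖₀ = |{ i : t i ≠ 0 }|. -/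
/-!
Column orthogonality of each contrast matrix gives the indicator expansion
`[x agrees with y on S] = (∏_{i ∈ S} s i)⁻¹ ∑_{supp t ⊆ S} C_t(y) C_t(x)`. Summing over the runs,
the number of runs agreeing with `y` on `S` is `(∏_{i ∈ S} s i)⁻¹ ∑_{supp t ⊆ S} C_t(y) M_t`,
where `M_t = N b_t`. When `|S| = m` and the `M_t` with `1 ≤ ‖t‖₀ ≤ m` vanish, only the term
`t = 0`, equal to `n`, survives. Conversely, orthogonality of the product basis inverts the
expansion, expressing `M_t` through `∑_y count_S(y) C_t(y)`; for a constant count this is a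
multiple of `∑_y C_t(y)`, which is `0` for `t ≠ 0`.
-/

open Finset Fintype Matrix

theorem Matrix.transpose_mul_self_eq_smul_one_of_mul_transpose_self {n K : Type*} [Fintype n]
    [DecidableEq n] [Field K] {M : Matrix n n K} {c : K} (hc : c ≠ 0) (h : M * Mᵀ = c • 1) :
    Mᵀ * M = c • 1 := by
  have hinv : M * (c⁻¹ • Mᵀ) = 1 := by
    rw [Matrix.mul_smul, h, smul_smul, inv_mul_cancel₀ hc, one_smul]
  rw [← smul_right_inj (inv_ne_zero hc), smul_smul, inv_mul_cancel₀ hc, one_smul,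
    ← Matrix.smul_mul, mul_eq_one_comm.mp hinv]

theorem sum_mul_eq_ite_of_rows_orthogonal {n K : Type*} [Fintype n] [DecidableEq n] [Field K]
    {C : n → n → K} {c : K} (hc : c ≠ 0) (h : ∀ u v, ∑ x, C u x * C v x = if u = v then c else 0)
    (x y : n) : ∑ u, C u x * C u y = if x = y then c else 0 := by
  have hM : Matrix.of C * (Matrix.of C)ᵀ = c • 1 := by
    ext u v
    simp [Matrix.mul_apply, h, Matrix.one_apply]
  have := congrFun₂ (transpose_mul_self_eq_smul_one_of_mul_transpose_self hc hM) x y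
  simpa [Matrix.mul_apply, Matrix.one_apply] using this

theorem Multiset.natCast_card_filter {α : Type*} (A : Multiset α) (p : α → Prop)
    [DecidablePred p] : ((A.filter p).card : ℝ) = (A.map fun x => if p x then 1 else 0).sum := by
  induction A using Multiset.induction_on with
  | empty => simp
  | cons a A ih => by_cases h : p a <;> simp [h, ih, add_comm]

namespace FactorialDesign

variable {ι : Type*} {α : ι → Type*}

section Counts

variable [∀ i, DecidableEq (α i)]

def agreeCount (A : Multiset (∀ i, α i)) (S : Finset ι) (y : ∀ i, α i) : ℕ :=
  (A.filter fun x => ∀ i ∈ S, x i = y i).card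

def IsOrthogonalArray [∀ i, Fintype (α i)] (A : Multiset (∀ i, α i)) (m : ℕ) : Prop :=
  ∀ S : Finset ι, #S = m → ∀ y, (agreeCount A S y : ℝ) = A.card / ∏ i ∈ S, (card (α i) : ℝ)

end Counts

variable [Fintype ι]

def contrast (C : ∀ i, α i → α i → ℝ) (t x : ∀ i, α i) : ℝ := ∏ i, C i (t i) (x i)

def moment (C : ∀ i, α i → α i → ℝ) (A : Multiset (∀ i, α i)) (t : ∀ i, α i) : ℝ :=
  (A.map (contrast C t)).sum

theorem contrast_base {C : ∀ i, α i → α i → ℝ} {o : ∀ i, α i} (hC0 : ∀ i x, C i (o i) x = 1)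
    (x : ∀ i, α i) : contrast C o x = 1 := by
  simp [contrast, hC0]

variable [∀ i, DecidableEq (α i)]

/-- `o i` indexes the constant contrast of factor `i`, so `#(contrastSupport o t)` is `‖t‖₀`. -/
def contrastSupport (o t : ∀ i, α i) : Finset ι := {i | t i ≠ o i}

theorem contrastSupport_nonempty_iff {o t : ∀ i, α i} :
    (contrastSupport o t).Nonempty ↔ t ≠ o := by
  simp [contrastSupport, Finset.Nonempty, funext_iff]

variable [DecidableEq ι] [∀ i, Fintype (α i)]

def supportedIn (o : ∀ i, α i) (S : Finset ι) : Finset (∀ i, α i) :=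
  piFinset fun i => if i ∈ S then univ else {o i}

theorem mem_supportedIn {o t : ∀ i, α i} {S : Finset ι} :
    t ∈ supportedIn o S ↔ contrastSupport o t ⊆ S := by
  simp only [supportedIn, contrastSupport, mem_piFinset, subset_iff, mem_filter, mem_univ,
    true_and]
  refine forall_congr' fun i => ?_
  by_cases hi : i ∈ S <;> simp [hi]

theorem sum_contrast_mul_contrast {C : ∀ i, α i → α i → ℝ}
    (hrow : ∀ i u v, ∑ x, C i u x * C i v x = if u = v then (card (α i) : ℝ) else 0)
    (t t' : ∀ i, α i) :
    ∑ x, contrast C t x * contrast C t' x = if t = t' then ∏ i, (card (α i) : ℝ) else 0 := by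
  simp only [contrast, ← prod_mul_distrib]
  rw [← Fintype.prod_sum fun i z => C i (t i) z * C i (t' i) z]
  simp only [hrow, Fintype.prod_ite_zero, funext_iff]

theorem sum_contrast_eq_zero {C : ∀ i, α i → α i → ℝ} {o t : ∀ i, α i}
    (hrow : ∀ i u v, ∑ x, C i u x * C i v x = if u = v then (card (α i) : ℝ) else 0)
    (hC0 : ∀ i x, C i (o i) x = 1) (ht : t ≠ o) : ∑ x, contrast C t x = 0 := by
  simpa [contrast_base hC0, ht] using sum_contrast_mul_contrast hrow t o

theorem sum_supportedIn_contrast_mul_contrast {C : ∀ i, α i → α i → ℝ} {o : ∀ i, α i}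
    (hrow : ∀ i u v, ∑ x, C i u x * C i v x = if u = v then (card (α i) : ℝ) else 0)
    (hC0 : ∀ i x, C i (o i) x = 1) (S : Finset ι) (x y : ∀ i, α i) :
    ∑ t ∈ supportedIn o S, contrast C t y * contrast C t x =
      if ∀ i ∈ S, x i = y i then ∏ i ∈ S, (card (α i) : ℝ) else 0 := by
  have hcol (i : ι) :
      ∑ u, C i u (y i) * C i u (x i) = if x i = y i then (card (α i) : ℝ) else 0 := by
    have hcard : (card (α i) : ℝ) ≠ 0 := Nat.cast_ne_zero.mpr (@Fintype.card_ne_zero _ _ ⟨o i⟩)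
    simp only [sum_mul_eq_ite_of_rows_orthogonal hcard (hrow i), eq_comm]
  have hfactor (i : ι) :
      ∑ u ∈ (if i ∈ S then univ else {o i}), C i u (y i) * C i u (x i) =
        if i ∈ S then (if x i = y i then (card (α i) : ℝ) else 0) else 1 := by
    by_cases hi : i ∈ S <;> simp [hi, hcol, hC0]
  simp only [supportedIn, contrast, ← prod_mul_distrib]
  rw [← prod_univ_sum (fun i => if i ∈ S then univ else {o i})
    fun i u => C i u (y i) * C i u (x i)]
  simp only [hfactor, Fintype.prod_ite_mem, Finset.prod_ite_zero]
  congr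

theorem prod_card_mul_agreeCount {C : ∀ i, α i → α i → ℝ} {o : ∀ i, α i}
    (hrow : ∀ i u v, ∑ x, C i u x * C i v x = if u = v then (card (α i) : ℝ) else 0)
    (hC0 : ∀ i x, C i (o i) x = 1) (A : Multiset (∀ i, α i)) (S : Finset ι) (y : ∀ i, α i) :
    (∏ i ∈ S, (card (α i) : ℝ)) * agreeCount A S y =
      ∑ t ∈ supportedIn o S, contrast C t y * moment C A t := by
  simp only [agreeCount, Multiset.natCast_card_filter, moment, ← Multiset.sum_map_mul_left,
    ← Multiset.sum_map_sum, sum_supportedIn_contrast_mul_contrast hrow hC0, mul_ite, mul_one,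
    mul_zero]

theorem prod_card_mul_moment {C : ∀ i, α i → α i → ℝ} {o : ∀ i, α i}
    (hrow : ∀ i u v, ∑ x, C i u x * C i v x = if u = v then (card (α i) : ℝ) else 0)
    (hC0 : ∀ i x, C i (o i) x = 1) (A : Multiset (∀ i, α i)) {S : Finset ι} {t : ∀ i, α i}
    (ht : t ∈ supportedIn o S) :
    (∏ i, (card (α i) : ℝ)) * moment C A t =
      ∑ y, contrast C t y * ((∏ i ∈ S, (card (α i) : ℝ)) * agreeCount A S y) := by
  simp_rw [prod_card_mul_agreeCount hrow hC0, mul_sum]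
  rw [sum_comm]
  simp_rw [← mul_assoc, ← sum_mul, sum_contrast_mul_contrast hrow, ite_mul, zero_mul,
    Finset.sum_ite_eq, if_pos ht]

theorem isOrthogonalArray_iff_moment_eq_zero {C : ∀ i, α i → α i → ℝ} {o : ∀ i, α i}
    (hrow : ∀ i u v, ∑ x, C i u x * C i v x = if u = v then (card (α i) : ℝ) else 0)
    (hC0 : ∀ i x, C i (o i) x = 1) (A : Multiset (∀ i, α i)) {m : ℕ} (hm : m ≤ card ι) :
    IsOrthogonalArray A m ↔
      ∀ t, 1 ≤ #(contrastSupport o t) → #(contrastSupport o t) ≤ m → moment C A t = 0 := by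
  have hprod_ne_zero (S : Finset ι) : ∏ i ∈ S, (card (α i) : ℝ) ≠ 0 :=
    prod_ne_zero_iff.mpr fun i _ => Nat.cast_ne_zero.mpr (@Fintype.card_ne_zero _ _ ⟨o i⟩)
  constructor
  · intro hOA t hpos hle
    obtain ⟨S, hsub, hS⟩ := exists_superset_card_eq hle hm
    have hto : t ≠ o := contrastSupport_nonempty_iff.mp (card_pos.mp hpos)
    have h : (∏ i, (card (α i) : ℝ)) * moment C A t = 0 := by
      simp_rw [prod_card_mul_moment hrow hC0 A (mem_supportedIn.mpr hsub), hOA S hS,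
        mul_div_cancel₀ _ (hprod_ne_zero S), ← sum_mul, sum_contrast_eq_zero hrow hC0 hto,
        zero_mul]
    exact (mul_eq_zero.mp h).resolve_left (hprod_ne_zero univ)
  · intro hvanish S hS y
    rw [eq_div_iff (hprod_ne_zero S), mul_comm, prod_card_mul_agreeCount hrow hC0,
      Finset.sum_eq_single o]
    · simp [moment, contrast_base hC0]
    · intro t ht hto
      have hsupp := mem_supportedIn.mp ht
      rw [hvanish t (card_pos.mpr (contrastSupport_nonempty_iff.mpr hto))
        (hS ▸ card_le_card hsupp), mul_zero]
    · intro ho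
      exact absurd (mem_supportedIn.mpr (by simp [contrastSupport])) ho

end FactorialDesign

open FactorialDesign in
theorem orthogonal_array_iff_coefficients_vanish_general
    (k : ℕ) (s : Fin k → ℕ) (hs : ∀ i, 1 ≤ s i)
    (C : ∀ i : Fin k, Fin (s i) → Fin (s i) → ℝ)
    (horth : ∀ (i : Fin k) (u v : Fin (s i)),
      ∑ x : Fin (s i), C i u x * C i v x = if u = v then (s i : ℝ) else 0)
    (hC0 : ∀ (i : Fin k) (x : Fin (s i)), C i ⟨0, hs i⟩ x = 1)
    (A : Multiset (∀ i, Fin (s i)))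
    (b : (∀ i, Fin (s i)) → ℝ)
    (hb : ∀ t : (∀ i, Fin (s i)),
      b t = (1 / ((∏ i, s i : ℕ) : ℝ)) * (A.map (fun x => ∏ i, C i (t i) (x i))).sum)
    (m : ℕ) (hmk : m ≤ k) :
    (∀ S : Finset (Fin k), S.card = m → ∀ y : (∀ i, Fin (s i)),
        ((A.filter (fun x => ∀ i ∈ S, x i = y i)).card : ℝ) =
          (Multiset.card A : ℝ) / ((∏ i ∈ S, s i : ℕ) : ℝ)) ↔
    (∀ t : (∀ i, Fin (s i)),
        1 ≤ (Finset.univ.filter (fun i : Fin k => (t i : ℕ) ≠ 0)).card →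
        (Finset.univ.filter (fun i : Fin k => (t i : ℕ) ≠ 0)).card ≤ m →
        b t = 0) := by
  let o : ∀ i, Fin (s i) := fun i => ⟨0, hs i⟩
  have hrow (i : Fin k) (u v : Fin (s i)) :
      ∑ x, C i u x * C i v x = if u = v then (card (Fin (s i)) : ℝ) else 0 := by
    simpa using horth i u v
  have hsupport (t : ∀ i, Fin (s i)) :
      univ.filter (fun i => (t i : ℕ) ≠ 0) = contrastSupport o t := by
    ext i
    simp [contrastSupport, o, Fin.ext_iff]
  have hN : ((∏ i, s i : ℕ) : ℝ) ≠ 0 :=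
    Nat.cast_ne_zero.mpr (prod_ne_zero_iff.mpr fun i _ => Nat.one_le_iff_ne_zero.mp (hs i))
  have hb_eq_zero (t : ∀ i, Fin (s i)) : b t = 0 ↔ moment C A t = 0 := by
    rw [hb t, mul_eq_zero, or_iff_right (one_div_ne_zero hN)]
    rfl
  simp only [hsupport, hb_eq_zero, Nat.cast_prod]
  simpa [IsOrthogonalArray, agreeCount] using
    isOrthogonalArray_iff_moment_eq_zero hrow hC0 A (m := m) (by simpa using hmk)

/-- **Xu–Wu.** A design `A` with `n` runs is an orthogonal array of
strength `m` (for every set `S` of `m` factors and every level assignment `y`, the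
number of runs agreeing with `y` on `S` is `n / Π_{i ∈ S} s i`) if and only if
`b_t = 0` for every `t ∈ T` with `1 ≤ ‖t‖₀ ≤ m`, where `‖t‖₀` is the number of
nonzero coordinates of `t`. -/
theorem orthogonal_array_iff_coefficients_vanish
    (k : ℕ) (hk : 1 ≤ k) (s : Fin k → ℕ) (hs : ∀ i, 1 ≤ s i)
    (C : ∀ i : Fin k, Fin (s i) → Fin (s i) → ℝ)
    (horth : ∀ (i : Fin k) (u v : Fin (s i)),
      ∑ x : Fin (s i), C i u x * C i v x = if u = v then (s i : ℝ) else 0)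
    (hC0 : ∀ (i : Fin k) (x : Fin (s i)), C i ⟨0, hs i⟩ x = 1)
    (A : Multiset (∀ i, Fin (s i)))
    (b : (∀ i, Fin (s i)) → ℝ)
    (hb : ∀ t : (∀ i, Fin (s i)),
      b t = (1 / ((∏ i, s i : ℕ) : ℝ)) * (A.map (fun x => ∏ i, C i (t i) (x i))).sum)
    (m : ℕ) (hm1 : 1 ≤ m) (hmk : m ≤ k) :
    (∀ S : Finset (Fin k), S.card = m → ∀ y : (∀ i, Fin (s i)),
        ((A.filter (fun x => ∀ i ∈ S, x i = y i)).card : ℝ) =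
          (Multiset.card A : ℝ) / ((∏ i ∈ S, s i : ℕ) : ℝ)) ↔
    (∀ t : (∀ i, Fin (s i)),
        1 ≤ (Finset.univ.filter (fun i : Fin k => (t i : ℕ) ≠ 0)).card →
        (Finset.univ.filter (fun i : Fin k => (t i : ℕ) ≠ 0)).card ≤ m →
        b t = 0) :=
  orthogonal_array_iff_coefficients_vanish_general k s hs C horth hC0 A b hb m hmk
end
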